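/- For f ∈ O, B²f = f holds if and only if for every λ > 0 the sublevel set C_f(λ) = {p ∈ ℝⁿ₊ : f(p) < λ} is positive convex, i.e., it is convex and for every p₀ ∈ ℝⁿ₊ \ C_f(λ) there exist q ∈ ℝⁿ₊ and γ > 0 such that ⟨p₀,q⟩ ≥ γ and ⟨p,q⟩ < γ for all p ∈ C_f(λ). -/
import Mathlib


open Finset

noncomputable def inn {n : ℕ} (p q : Fin n → ℝ) : ℝ := ∑ i, p i * q i

noncomputable def nrm {n : ℕ} (p : Fin n → ℝ) : ℝ := Real.sqrt (∑ i, (p i)^2)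

def Orth (n : ℕ) : Set (Fin n → ℝ) := {p | ∀ i, 0 ≤ p i}

noncomputable def B {n : ℕ} (f : (Fin n → ℝ) → ℝ) (p : Fin n → ℝ) : ℝ :=
  sSup {x | ∃ q ∈ Orth n, q ≠ 0 ∧ x = inn p q / f q}

def MemO {n : ℕ} (f : (Fin n → ℝ) → ℝ) : Prop :=
  (∀ p ∈ Orth n, ∀ l : ℝ, 0 < l → f (l • p) = l * f p) ∧
  (∀ p ∈ Orth n, p ≠ 0 → 0 < f p) ∧
  (∃ c₁ c₂ : ℝ, 0 < c₁ ∧ 0 < c₂ ∧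
    ∀ p ∈ Orth n, c₁ * nrm p ≤ f p ∧ f p ≤ c₂ * nrm p) ∧
  ContinuousOn f (Orth n)

def PositiveConvex {n : ℕ} (C : Set (Fin n → ℝ)) : Prop :=
  Convex ℝ C ∧ ∀ p₀ ∈ Orth n, p₀ ∉ C → ∃ q ∈ Orth n, ∃ γ : ℝ, 0 < γ ∧
    γ ≤ inn p₀ q ∧ ∀ p ∈ C, inn p q < γ

section Aux

variable {n : ℕ}

def Sset (F : (Fin n → ℝ) → ℝ) (p : Fin n → ℝ) : Set ℝ :=
  {x | ∃ q ∈ Orth n, q ≠ 0 ∧ x = inn p q / F q}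

lemma B_def (F : (Fin n → ℝ) → ℝ) (p : Fin n → ℝ) : B F p = sSup (Sset F p) := rfl

lemma orth_zero : (0 : Fin n → ℝ) ∈ Orth n := fun _ => le_refl 0

lemma orth_smul {q : Fin n → ℝ} (hq : q ∈ Orth n) {l : ℝ} (hl : 0 ≤ l) : l • q ∈ Orth n :=
  fun i => by simpa using mul_nonneg hl (hq i)

lemma inn_nonneg {p q : Fin n → ℝ} (hp : p ∈ Orth n) (hq : q ∈ Orth n) : 0 ≤ inn p q :=
  Finset.sum_nonneg fun i _ => mul_nonneg (hp i) (hq i)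

lemma inn_comm (p q : Fin n → ℝ) : inn p q = inn q p := by
  simp [inn, mul_comm]

lemma inn_smul_left (l : ℝ) (p q : Fin n → ℝ) : inn (l • p) q = l * inn p q := by
  simp [inn, Finset.mul_sum, mul_assoc]

lemma inn_smul_right (l : ℝ) (p q : Fin n → ℝ) : inn p (l • q) = l * inn p q := by
  rw [inn_comm, inn_smul_left, inn_comm]

lemma inn_zero_left (q : Fin n → ℝ) : inn 0 q = 0 := by simp [inn]

lemma inn_sub_left (p p' q : Fin n → ℝ) : inn (p - p') q = inn p q - inn p' q := by
  simp [inn, sub_mul, Finset.sum_sub_distrib]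

lemma inn_combo (a b : ℝ) (p₁ p₂ q : Fin n → ℝ) :
    inn (a • p₁ + b • p₂) q = a * inn p₁ q + b * inn p₂ q := by
  simp [inn, Finset.mul_sum, ← Finset.sum_add_distrib, add_mul, mul_assoc]

lemma sq_sum_nonneg (p : Fin n → ℝ) : 0 ≤ ∑ i, (p i)^2 :=
  Finset.sum_nonneg fun _ _ => sq_nonneg _

lemma nrm_nonneg (p : Fin n → ℝ) : 0 ≤ nrm p := Real.sqrt_nonneg _

lemma nrm_zero : nrm (0 : Fin n → ℝ) = 0 := by simp [nrm]

lemma nrm_pos {p : Fin n → ℝ} (hp : p ≠ 0) : 0 < nrm p := by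
  rw [nrm, Real.sqrt_pos]
  have h : ∃ i, p i ≠ 0 := by
    by_contra h; push_neg at h; exact hp (funext h)
  obtain ⟨i, hi⟩ := h
  exact lt_of_lt_of_le (by positivity)
    (Finset.single_le_sum (f := fun j => (p j)^2) (fun j _ => sq_nonneg _) (Finset.mem_univ i))

lemma inn_self (p : Fin n → ℝ) : inn p p = nrm p ^ 2 := by
  rw [nrm, Real.sq_sqrt (sq_sum_nonneg p), inn]
  simp [sq]

lemma inn_le_nrm (p q : Fin n → ℝ) : inn p q ≤ nrm p * nrm q :=
  Real.sum_mul_le_sqrt_mul_sqrt _ _ _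

lemma nrm_smul (l : ℝ) (p : Fin n → ℝ) : nrm (l • p) = |l| * nrm p := by
  rw [nrm, nrm]
  have h : ∀ i, ((l • p) i)^2 = l^2 * (p i)^2 := fun i => by
    simp [mul_pow]
  simp_rw [h, ← Finset.mul_sum]
  rw [Real.sqrt_mul (sq_nonneg l), Real.sqrt_sq_eq_abs]

lemma Sset_le {F : (Fin n → ℝ) → ℝ} {c : ℝ} (hc : 0 < c)
    (hF : ∀ q ∈ Orth n, c * nrm q ≤ F q) (p : Fin n → ℝ) :
    ∀ x ∈ Sset F p, x ≤ nrm p / c := by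
  rintro x ⟨q, hq, hq0, rfl⟩
  have hnq : 0 < nrm q := nrm_pos hq0
  have hFq : 0 < F q := lt_of_lt_of_le (by positivity) (hF q hq)
  rw [div_le_div_iff₀ hFq hc]
  calc inn p q * c ≤ (nrm p * nrm q) * c :=
        mul_le_mul_of_nonneg_right (inn_le_nrm p q) hc.le
    _ ≤ nrm p * F q := by nlinarith [hF q hq, nrm_nonneg p]

lemma B_bddAbove {F : (Fin n → ℝ) → ℝ} {c : ℝ} (hc : 0 < c)
    (hF : ∀ q ∈ Orth n, c * nrm q ≤ F q) (p : Fin n → ℝ) :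
    BddAbove (Sset F p) :=
  ⟨nrm p / c, fun x hx => Sset_le hc hF p x hx⟩

lemma le_B {F : (Fin n → ℝ) → ℝ} {c : ℝ} (hc : 0 < c)
    (hF : ∀ q ∈ Orth n, c * nrm q ≤ F q)
    (p : Fin n → ℝ) {q : Fin n → ℝ} (hq : q ∈ Orth n) (hq0 : q ≠ 0) :
    inn p q / F q ≤ B F p :=
  le_csSup (B_bddAbove hc hF p) ⟨q, hq, hq0, rfl⟩

lemma B_nonneg {F : (Fin n → ℝ) → ℝ} {c : ℝ} (hc : 0 < c)
    (hF : ∀ q ∈ Orth n, c * nrm q ≤ F q) {p : Fin n → ℝ} (hp : p ∈ Orth n) :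
    0 ≤ B F p := by
  apply Real.sSup_nonneg
  rintro x ⟨q, hq, hq0, rfl⟩
  have hFq : 0 < F q := lt_of_lt_of_le (mul_pos hc (nrm_pos hq0)) (hF q hq)
  exact div_nonneg (inn_nonneg hp hq) hFq.le

lemma B_lb_all {F : (Fin n → ℝ) → ℝ} {c C : ℝ} (hc : 0 < c) (hC : 0 < C)
    (hlb : ∀ q ∈ Orth n, c * nrm q ≤ F q) (hub : ∀ q ∈ Orth n, F q ≤ C * nrm q) :
    ∀ q ∈ Orth n, (1/C) * nrm q ≤ B F q := by
  intro q hq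
  by_cases h0 : q = 0
  · subst h0
    rw [nrm_zero, mul_zero]
    exact B_nonneg hc hlb orth_zero
  · have h1 : inn q q / F q ≤ B F q := le_B hc hlb q hq h0
    rw [inn_self] at h1
    have hnq : 0 < nrm q := nrm_pos h0
    have hFq : 0 < F q := lt_of_lt_of_le (mul_pos hc hnq) (hlb q hq)
    have h2 : (1/C) * nrm q ≤ nrm q ^ 2 / F q := by
      rw [le_div_iff₀ hFq]
      have h3 : (1/C) * nrm q * F q ≤ (1/C) * nrm q * (C * nrm q) :=
        mul_le_mul_of_nonneg_left (hub q hq) (by positivity)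
      have h4 : (1/C) * nrm q * (C * nrm q) = nrm q ^ 2 := by
        field_simp
      linarith
    linarith

lemma B_smul_le {F : (Fin n → ℝ) → ℝ} {c : ℝ} (hc : 0 < c)
    (hF : ∀ q ∈ Orth n, c * nrm q ≤ F q)
    {q : Fin n → ℝ} (hq : q ∈ Orth n) {l : ℝ} (hl : 0 < l) :
    B F (l • q) ≤ l * B F q := by
  apply Real.sSup_le
  · rintro x ⟨q', hq', hq0', rfl⟩
    rw [inn_smul_left, mul_div_assoc]
    exact mul_le_mul_of_nonneg_left (le_B hc hF q hq' hq0') hl.le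
  · exact mul_nonneg hl.le (B_nonneg hc hF hq)

lemma B_smul {F : (Fin n → ℝ) → ℝ} {c : ℝ} (hc : 0 < c)
    (hF : ∀ q ∈ Orth n, c * nrm q ≤ F q)
    {q : Fin n → ℝ} (hq : q ∈ Orth n) {l : ℝ} (hl : 0 < l) :
    B F (l • q) = l * B F q := by
  have h1 := B_smul_le hc hF hq hl
  have hq' : l • q ∈ Orth n := orth_smul hq hl.le
  have h2 := B_smul_le hc hF hq' (inv_pos.mpr hl)
  rw [smul_smul, inv_mul_cancel₀ hl.ne', one_smul] at h2
  have h3 := mul_le_mul_of_nonneg_left h2 hl.le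
  rw [← mul_assoc, mul_inv_cancel₀ hl.ne', one_mul] at h3
  linarith

lemma B_lip {F : (Fin n → ℝ) → ℝ} {c : ℝ} (hc : 0 < c)
    (hF : ∀ q ∈ Orth n, c * nrm q ≤ F q)
    {p' : Fin n → ℝ} (hp' : p' ∈ Orth n) (p : Fin n → ℝ) :
    B F p ≤ B F p' + nrm (p - p') / c := by
  apply Real.sSup_le
  · rintro x ⟨q, hq, hq0, rfl⟩
    have hFq : 0 < F q := lt_of_lt_of_le (mul_pos hc (nrm_pos hq0)) (hF q hq)
    have h1 : inn p' q / F q ≤ B F p' := le_B hc hF p' hq hq0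
    have h2 : inn (p - p') q / F q ≤ nrm (p - p') / c :=
      Sset_le hc hF (p - p') _ ⟨q, hq, hq0, rfl⟩
    have h3 : inn p q = inn p' q + inn (p - p') q := by
      rw [inn_sub_left]; ring
    rw [h3, add_div]
    linarith
  · have := B_nonneg hc hF hp'
    have : 0 ≤ nrm (p - p') / c := div_nonneg (nrm_nonneg _) hc.le
    linarith [B_nonneg hc hF hp']

lemma nrm_le_dist (p p' : Fin n → ℝ) : nrm (p - p') ≤ Real.sqrt n * dist p p' := by
  rw [nrm]
  have h : ∀ i : Fin n, ((p - p') i)^2 ≤ dist p p' ^ 2 := by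
    intro i
    have h1 : |p i - p' i| ≤ dist p p' := by
      have := dist_le_pi_dist p p' i
      rwa [Real.dist_eq] at this
    calc ((p - p') i)^2 = |p i - p' i|^2 := by rw [sq_abs]; simp [Pi.sub_apply]
      _ ≤ dist p p' ^ 2 := pow_le_pow_left₀ (abs_nonneg _) h1 2
  calc Real.sqrt (∑ i, ((p - p') i)^2) ≤ Real.sqrt (∑ _i : Fin n, dist p p' ^ 2) :=
        Real.sqrt_le_sqrt (Finset.sum_le_sum fun i _ => h i)
    _ = Real.sqrt (n * dist p p' ^ 2) := by
        rw [Finset.sum_const, Finset.card_univ, Fintype.card_fin, nsmul_eq_mul]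
    _ = Real.sqrt n * dist p p' := by
        rw [Real.sqrt_mul (Nat.cast_nonneg n), Real.sqrt_sq dist_nonneg]

lemma B_contOn {F : (Fin n → ℝ) → ℝ} {c : ℝ} (hc : 0 < c)
    (hF : ∀ q ∈ Orth n, c * nrm q ≤ F q) :
    ContinuousOn (B F) (Orth n) := by
  rw [Metric.continuousOn_iff]
  intro b hb ε hε
  set K : ℝ := Real.sqrt n / c with hKdef
  have hK0 : 0 ≤ K := div_nonneg (Real.sqrt_nonneg _) hc.le
  refine ⟨ε / (K + 1), by positivity, fun a ha hab => ?_⟩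
  have key : ∀ x, ∀ y ∈ Orth n, B F x - B F y ≤ K * dist x y := by
    intro x y hy
    have h1 := B_lip hc hF hy x
    have h2 : nrm (x - y) / c ≤ K * dist x y := by
      rw [hKdef, div_mul_eq_mul_div, div_le_div_iff₀ hc hc]
      have := nrm_le_dist x y
      nlinarith [nrm_le_dist x y]
    linarith
  have h1 := key a b hb
  have h2 := key b a ha
  rw [dist_comm b a] at h2
  rw [Real.dist_eq, abs_sub_lt_iff]
  have hd : K * dist a b < K * (ε / (K + 1)) + 0 ∨ True := Or.inr trivial
  have hKd : K * dist a b ≤ (K + 1) * dist a b := by nlinarith [dist_nonneg (x := a) (y := b)]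
  have hfin : (K + 1) * dist a b < ε := by
    have := mul_lt_mul_of_pos_left hab (show (0:ℝ) < K + 1 by linarith)
    rwa [mul_div_cancel₀ ε (show K + 1 ≠ 0 by linarith)] at this
  constructor <;> linarith

lemma orth_closed : IsClosed (Orth n) := by
  have h : Orth n = ⋂ i, {p : Fin n → ℝ | 0 ≤ p i} := by
    ext p; simp [Orth, Set.mem_iInter]
  rw [h]
  exact isClosed_iInter fun i => isClosed_le continuous_const (continuous_apply i)

lemma nrm_continuous : Continuous (nrm : (Fin n → ℝ) → ℝ) := by
  unfold nrm
  exact Real.continuous_sqrt.comp (continuous_finset_sum _ fun i _ => (continuous_apply i).pow 2)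

lemma inn_continuous (p : Fin n → ℝ) : Continuous (fun q => inn p q) := by
  unfold inn
  exact continuous_finset_sum _ fun i _ => continuous_const.mul (continuous_apply i)

lemma abs_le_nrm (p : Fin n → ℝ) (i : Fin n) : |p i| ≤ nrm p := by
  rw [nrm, ← Real.sqrt_sq_eq_abs]
  exact Real.sqrt_le_sqrt
    (Finset.single_le_sum (f := fun j => (p j)^2) (fun j _ => sq_nonneg _) (Finset.mem_univ i))

lemma sphere_compact : IsCompact {q : Fin n → ℝ | q ∈ Orth n ∧ nrm q = 1} := by
  apply Metric.isCompact_of_isClosed_isBounded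
  · exact orth_closed.inter (isClosed_eq nrm_continuous continuous_const)
  · apply (Metric.isBounded_closedBall (x := (0 : Fin n → ℝ)) (r := 1)).subset
    rintro q ⟨hq, hq1⟩
    rw [Metric.mem_closedBall, dist_zero_right]
    rw [pi_norm_le_iff_of_nonneg zero_le_one]
    intro i
    rw [Real.norm_eq_abs]
    calc |q i| ≤ nrm q := abs_le_nrm q i
      _ = 1 := hq1

lemma B_eq_max {F : (Fin n → ℝ) → ℝ} {c C : ℝ} (hc : 0 < c) (hC : 0 < C)
    (hlb : ∀ q ∈ Orth n, c * nrm q ≤ F q) (hub : ∀ q ∈ Orth n, F q ≤ C * nrm q)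
    {p₀ : Fin n → ℝ} (hp₀ : p₀ ∈ Orth n) (hp00 : p₀ ≠ 0) :
    ∃ q ∈ Orth n, q ≠ 0 ∧ B (B F) p₀ = inn p₀ q / B F q := by
  have hG : ∀ q ∈ Orth n, (1/C) * nrm q ≤ B F q := B_lb_all hc hC hlb hub
  have hC' : 0 < 1/C := by positivity
  set S := {q : Fin n → ℝ | q ∈ Orth n ∧ nrm q = 1} with hSdef
  have hS : IsCompact S := sphere_compact
  have hSne : S.Nonempty := by
    refine ⟨(nrm p₀)⁻¹ • p₀, orth_smul hp₀ (inv_pos.mpr (nrm_pos hp00)).le, ?_⟩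
    rw [nrm_smul, abs_of_pos (inv_pos.mpr (nrm_pos hp00))]
    exact inv_mul_cancel₀ (nrm_pos hp00).ne'
  have hGpos : ∀ q ∈ S, 0 < B F q := by
    rintro q ⟨hq, h1⟩
    have := hG q hq
    rw [h1, mul_one] at this
    linarith
  have hφ : ContinuousOn (fun q => inn p₀ q / B F q) S :=
    ContinuousOn.div (inn_continuous p₀).continuousOn
      ((B_contOn hc hlb).mono (fun q hq => hq.1)) (fun q hq => (hGpos q hq).ne')
  obtain ⟨qm, hqmS, hmax⟩ := hS.exists_isMaxOn hSne hφ
  have hqm0 : qm ≠ 0 := by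
    rintro rfl
    have := hqmS.2
    rw [nrm_zero] at this
    norm_num at this
  refine ⟨qm, hqmS.1, hqm0, ?_⟩
  apply le_antisymm
  · apply Real.sSup_le
    · rintro x ⟨q, hq, hq0, rfl⟩
      have hs : 0 < (nrm q)⁻¹ := inv_pos.mpr (nrm_pos hq0)
      have hmem : (nrm q)⁻¹ • q ∈ S := by
        refine ⟨orth_smul hq hs.le, ?_⟩
        rw [nrm_smul, abs_of_pos hs]
        exact inv_mul_cancel₀ (nrm_pos hq0).ne'
      have hle := isMaxOn_iff.mp hmax _ hmem
      have heq : inn p₀ ((nrm q)⁻¹ • q) / B F ((nrm q)⁻¹ • q) = inn p₀ q / B F q := by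
        rw [inn_smul_right, B_smul hc hlb hq hs, mul_div_mul_left _ _ hs.ne']
      rwa [heq] at hle
    · exact div_nonneg (inn_nonneg hp₀ hqmS.1) (hGpos qm hqmS).le
  · exact le_B hC' hG p₀ hqmS.1 hqm0

end Aux

theorem B_sq_fixed_iff_positive_convex {n : ℕ} (f : (Fin n → ℝ) → ℝ) (hf : MemO f) :
    (∀ p ∈ Orth n, B (B f) p = f p) ↔
      ∀ l : ℝ, 0 < l → PositiveConvex {p | p ∈ Orth n ∧ f p < l} := by
  obtain ⟨hhom, hposf, ⟨c₁, c₂, hc₁, hc₂, hbd⟩, hcont⟩ := hf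
  have hlb : ∀ q ∈ Orth n, c₁ * nrm q ≤ f q := fun q hq => (hbd q hq).1
  have hub : ∀ q ∈ Orth n, f q ≤ c₂ * nrm q := fun q hq => (hbd q hq).2
  have hf0 : f 0 = 0 := by
    have h := hhom 0 orth_zero 2 two_pos
    rw [smul_zero] at h; linarith
  have hfnn : ∀ p ∈ Orth n, 0 ≤ f p := fun p hp =>
    le_trans (mul_nonneg hc₁.le (nrm_nonneg p)) (hlb p hp)
  have hglb : ∀ q ∈ Orth n, (1/c₂) * nrm q ≤ B f q := B_lb_all hc₁ hc₂ hlb hub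
  have hc₂' : 0 < 1/c₂ := by positivity
  have hgpos : ∀ q ∈ Orth n, q ≠ 0 → 0 < B f q := by
    intro q hq hq0
    exact lt_of_lt_of_le (mul_pos hc₂' (nrm_pos hq0)) (hglb q hq)
  have hBBle : ∀ p ∈ Orth n, B (B f) p ≤ f p := by
    intro p hp
    apply Real.sSup_le _ (hfnn p hp)
    rintro x ⟨q, hq, hq0, rfl⟩
    by_cases hp0 : p = 0
    · subst hp0
      rw [inn_zero_left, zero_div, hf0]
    · have hgq : 0 < B f q := hgpos q hq hq0
      have h1 : inn q p / f p ≤ B f q := le_B hc₁ hlb q hp hp0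
      have hfp : 0 < f p := hposf p hp hp0
      rw [div_le_iff₀ hgq, inn_comm]
      rw [div_le_iff₀ hfp] at h1
      nlinarith
  constructor
  · -- forward direction
    intro hfix l hl
    constructor
    · rintro p₁ ⟨hp₁, hf₁⟩ p₂ ⟨hp₂, hf₂⟩ a b ha hb hab
      have hmem : a • p₁ + b • p₂ ∈ Orth n := fun i => by
        simpa using add_nonneg (mul_nonneg ha (hp₁ i)) (mul_nonneg hb (hp₂ i))
      refine ⟨hmem, ?_⟩
      have hsup : B (B f) (a • p₁ + b • p₂) ≤ a * f p₁ + b * f p₂ := by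
        apply Real.sSup_le
        · rintro x ⟨q, hq, hq0, rfl⟩
          have hgq : 0 < B f q := hgpos q hq hq0
          rw [inn_combo, add_div, mul_div_assoc, mul_div_assoc]
          have e₁ : inn p₁ q / B f q ≤ f p₁ := by
            have := le_B hc₂' hglb p₁ hq hq0
            rwa [hfix p₁ hp₁] at this
          have e₂ : inn p₂ q / B f q ≤ f p₂ := by
            have := le_B hc₂' hglb p₂ hq hq0
            rwa [hfix p₂ hp₂] at this
          have := mul_le_mul_of_nonneg_left e₁ ha
          have := mul_le_mul_of_nonneg_left e₂ hb
          linarith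
        · exact add_nonneg (mul_nonneg ha (hfnn p₁ hp₁)) (mul_nonneg hb (hfnn p₂ hp₂))
      have hlt : a * f p₁ + b * f p₂ < l := by
        by_cases ha0 : a = 0
        · subst ha0
          rw [zero_add] at hab
          subst hab
          simpa using hf₂
        · have ha' : 0 < a := lt_of_le_of_ne ha (Ne.symm ha0)
          have h1 : a * f p₁ < a * l := mul_lt_mul_of_pos_left hf₁ ha'
          have h2 : b * f p₂ ≤ b * l := mul_le_mul_of_nonneg_left hf₂.le hb
          nlinarith
      calc f (a • p₁ + b • p₂) = B (B f) (a • p₁ + b • p₂) := (hfix _ hmem).symm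
        _ ≤ a * f p₁ + b * f p₂ := hsup
        _ < l := hlt
    · intro p₀ hp₀ hp₀C
      have hfp₀ : l ≤ f p₀ := by
        by_contra h
        push_neg at h
        exact hp₀C ⟨hp₀, h⟩
      have hp00 : p₀ ≠ 0 := by
        rintro rfl
        rw [hf0] at hfp₀
        linarith
      obtain ⟨qs, hqs, hqs0, hqeq⟩ := B_eq_max hc₁ hc₂ hlb hub hp₀ hp00
      have hgqs : 0 < B f qs := hgpos qs hqs hqs0
      refine ⟨qs, hqs, l * B f qs, mul_pos hl hgqs, ?_, ?_⟩
      · have heq : f p₀ = inn p₀ qs / B f qs := by rw [← hfix p₀ hp₀, hqeq]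
        have h2 : inn p₀ qs = f p₀ * B f qs := by
          rw [heq, div_mul_cancel₀ _ hgqs.ne']
        rw [h2]
        nlinarith
      · rintro p ⟨hp, hfp⟩
        by_cases hp0 : p = 0
        · subst hp0
          rw [inn_zero_left]
          exact mul_pos hl hgqs
        · have h1 := le_B hc₁ hlb qs hp hp0
          have hfp' : 0 < f p := hposf p hp hp0
          rw [div_le_iff₀ hfp'] at h1
          rw [inn_comm]
          calc inn qs p ≤ B f qs * f p := h1
            _ < B f qs * l := mul_lt_mul_of_pos_left hfp hgqs
            _ = l * B f qs := mul_comm _ _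
  · -- backward direction
    intro hPC p₀ hp₀
    refine le_antisymm (hBBle p₀ hp₀) ?_
    by_cases hp00 : p₀ = 0
    · subst hp00
      rw [hf0]
      apply Real.sSup_nonneg
      rintro x ⟨q, hq, hq0, rfl⟩
      exact div_nonneg (inn_nonneg orth_zero hq) (hgpos q hq hq0).le
    · have hfp₀ : 0 < f p₀ := hposf p₀ hp₀ hp00
      apply le_of_forall_lt
      intro c hc
      obtain ⟨lam, h1, h2⟩ := exists_between (show max c 0 < f p₀ from max_lt hc hfp₀)
      have hlam : 0 < lam := lt_of_le_of_lt (le_max_right c 0) h1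
      obtain ⟨hconv, hsep⟩ := hPC lam hlam
      have hp₀notC : p₀ ∉ {p | p ∈ Orth n ∧ f p < lam} := by
        rintro ⟨_, h⟩
        exact absurd h (not_lt.mpr h2.le)
      obtain ⟨q, hq, γ, hγ, hγp₀, hγC⟩ := hsep p₀ hp₀ hp₀notC
      have hq0 : q ≠ 0 := by
        rintro rfl
        rw [inn_comm, inn_zero_left] at hγp₀
        linarith
      have hgq : 0 < B f q := hgpos q hq hq0
      have hkey : B f q ≤ γ / lam := by
        apply Real.sSup_le _ (div_nonneg hγ.le hlam.le)
        rintro x ⟨p, hp, hp0, rfl⟩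
        have hfp : 0 < f p := hposf p hp hp0
        rw [div_le_div_iff₀ hfp hlam]
        have hstep : ∀ m : ℝ, 0 < m → m < lam → inn q p * m ≤ γ * f p := by
          intro m hm hml
          have hsc : (m / f p) • p ∈ {p | p ∈ Orth n ∧ f p < lam} := by
            refine ⟨orth_smul hp (by positivity), ?_⟩
            rw [hhom p hp _ (by positivity), div_mul_cancel₀ _ hfp.ne']
            exact hml
          have hlt := hγC _ hsc
          rw [inn_smul_left, div_mul_eq_mul_div, div_lt_iff₀ hfp] at hlt
          rw [inn_comm]
          nlinarith
        by_contra hcon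
        push_neg at hcon
        have hinn : 0 < inn q p := by nlinarith [inn_nonneg hq hp, mul_pos hγ hfp]
        set t := γ * f p / inn q p with htdef
        have ht : 0 < t := by positivity
        have htl : t < lam := by
          rw [htdef, div_lt_iff₀ hinn]
          nlinarith
        obtain ⟨m, hm1, hm2⟩ := exists_between htl
        have hst := hstep m (lt_trans ht hm1) hm2
        rw [htdef, div_lt_iff₀ hinn] at hm1
        nlinarith
      have helem : inn p₀ q / B f q ≤ B (B f) p₀ := le_B hc₂' hglb p₀ hq hq0
      have hle : lam ≤ inn p₀ q / B f q := by
        rw [le_div_iff₀ hgq]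
        have h3 : lam * B f q ≤ γ := by
          have := mul_le_mul_of_nonneg_left hkey hlam.le
          rwa [mul_div_cancel₀ _ hlam.ne'] at this
        linarith
      calc c < lam := lt_of_le_of_lt (le_max_left c 0) h1
        _ ≤ inn p₀ q / B f q := hle
        _ ≤ B (B f) p₀ := helem
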